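/- arXiv:0711.2775 — 3 statements merged into one kernel-verified Lean document; each statement's English description precedes it below -/
import Mathlib

section
/- Let g be a finite-dimensional real Lie algebra that admits an invariant positive definite symmetric bilinear form. Then the center of g is precisely the set of all elements u ∈ g that are orthogonal to all of g with respect to the scalar product ⟨u,v⟩ = -tr(ad u ∘ ad v); that is, center(g) = { u ∈ g : tr(ad u ∘ ad v) = 0 for all v ∈ g }. -/
/-!
An invariant inner product makes every `ad u` skew-adjoint, so in an orthonormal basis `(eᵢ)`
one has `tr (ad u ∘ ad u) = -∑ ‖⁅u, eᵢ⁆‖²`. If `u` is orthogonal to all of `g`, in particular to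
itself, this sum vanishes, so `ad u = 0` and `u` is central.
-/

open scoped InnerProductSpace

namespace LinearMap

variable {E : Type*} [NormedAddCommGroup E] [InnerProductSpace ℝ E]

theorem trace_comp_self_eq_neg_sum_norm_sq_of_skew {ι : Type*} [Fintype ι] {f : E →ₗ[ℝ] E}
    (hf : ∀ x y, ⟪f x, y⟫_ℝ = -⟪x, f y⟫_ℝ) (b : OrthonormalBasis ι ℝ E) :
    trace ℝ E (f ∘ₗ f) = -∑ i, ‖f (b i)‖ ^ 2 := by
  rw [trace_eq_sum_inner _ b, ← Finset.sum_neg_distrib]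
  refine Fintype.sum_congr _ _ fun i => ?_
  rw [comp_apply, ← neg_neg ⟪b i, f (f (b i))⟫_ℝ, ← hf, real_inner_comm,
    real_inner_self_eq_norm_sq]

theorem eq_zero_of_skew_of_trace_comp_self_eq_zero [FiniteDimensional ℝ E] {f : E →ₗ[ℝ] E}
    (hf : ∀ x y, ⟪f x, y⟫_ℝ = -⟪x, f y⟫_ℝ) (h : trace ℝ E (f ∘ₗ f) = 0) : f = 0 := by
  let b := stdOrthonormalBasis ℝ E
  rw [trace_comp_self_eq_neg_sum_norm_sq_of_skew hf b, neg_eq_zero,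
    Finset.sum_eq_zero_iff_of_nonneg fun i _ => sq_nonneg _] at h
  refine b.toBasis.ext fun i => ?_
  simpa using h i (Finset.mem_univ i)

end LinearMap

namespace LinearMap.BilinForm

variable {V : Type*} [AddCommGroup V] [Module ℝ V]

abbrev toInnerProductSpaceCore (B : LinearMap.BilinForm ℝ V) (hsymm : ∀ u v, B u v = B v u)
    (hpos : ∀ u, u ≠ 0 → 0 < B u u) : InnerProductSpace.Core ℝ V where
  inner u v := B u v
  conj_inner_symm u v := hsymm v u
  re_inner_nonneg u := by
    rcases eq_or_ne u 0 with rfl | hu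
    · simp
    · exact (hpos u hu).le
  add_left u v w := by simp
  smul_left u v r := by simp
  definite u hu := by
    by_contra hne
    exact (hpos u hne).ne' hu

theorem eq_zero_of_skew_of_trace_comp_self_eq_zero [FiniteDimensional ℝ V]
    (B : LinearMap.BilinForm ℝ V) (hsymm : ∀ u v, B u v = B v u)
    (hpos : ∀ u, u ≠ 0 → 0 < B u u) {f : V →ₗ[ℝ] V}
    (hf : ∀ x y, B (f x) y = -B x (f y)) (h : trace ℝ V (f ∘ₗ f) = 0) : f = 0 := by
  let core := B.toInnerProductSpaceCore hsymm hpos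
  let _ : NormedAddCommGroup V := core.toNormedAddCommGroup
  let _ : InnerProductSpace ℝ V := .ofCore core.toCore
  exact LinearMap.eq_zero_of_skew_of_trace_comp_self_eq_zero hf h

end LinearMap.BilinForm

theorem LieAlgebra.mem_center_iff_ad_eq_zero {R L : Type*} [CommRing R] [LieRing L]
    [LieAlgebra R L] {u : L} : u ∈ center R L ↔ ad R L u = 0 := by
  rw [← self_module_ker_eq_center, LieModule.mem_ker, LinearMap.ext_iff]
  rfl

/-- Let `g` be a finite-dimensional real Lie algebra admitting an invariant positive
definite symmetric bilinear form. Then the center of `g` is precisely the set of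
elements `u` orthogonal to all of `g` with respect to `⟨u,v⟩ = -tr(ad u ∘ ad v)`. -/
theorem center_eq_killing_orthogonal
    {L : Type*} [LieRing L] [LieAlgebra ℝ L] [FiniteDimensional ℝ L]
    (B : LinearMap.BilinForm ℝ L)
    (hsymm : ∀ u v : L, B u v = B v u)
    (hinv : ∀ x u v : L, B ⁅x, u⁆ v + B u ⁅x, v⁆ = 0)
    (hpos : ∀ u : L, u ≠ 0 → 0 < B u u) :
    ∀ u : L, u ∈ LieAlgebra.center ℝ L ↔
      ∀ v : L, LinearMap.trace ℝ L (LieAlgebra.ad ℝ L u ∘ₗ LieAlgebra.ad ℝ L v) = 0 := by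
  intro u
  rw [LieAlgebra.mem_center_iff_ad_eq_zero]
  refine ⟨fun hu v => by simp [hu], fun h => ?_⟩
  have had_skew : ∀ x y, B (LieAlgebra.ad ℝ L u x) y = -B x (LieAlgebra.ad ℝ L u y) :=
    fun x y => eq_neg_of_add_eq_zero_left (hinv u x y)
  exact B.eq_zero_of_skew_of_trace_comp_self_eq_zero hsymm hpos had_skew (h u)
end

section
/- Let g be a finite-dimensional real Lie algebra such that the scalar product ⟨u,v⟩ = -tr(ad u ∘ ad v) is positive definite. Then the set of all automorphisms of g, regarded as a subset of the (finite-dimensional, normed) space of linear endomorphisms of g, is compact. -/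
/-!
An automorphism `f` conjugates `ad u` into `ad (f u)`, so it preserves `⟨u, v⟩ = -tr(ad u ∘ ad v)`.
A positive definite form on a finite-dimensional space is coercive, so the maps preserving it are
uniformly bounded in operator norm. Conversely a bracket homomorphism preserving a positive definite
form is injective, hence bijective; so the automorphisms are exactly the bracket homomorphisms
preserving `⟨·, ·⟩`, a closed set. Heine–Borel concludes.
-/

open Bornology Function

namespace LinearMap

variable {𝕜 E F G : Type*} [NontriviallyNormedField 𝕜] [CompleteSpace 𝕜]
  [NormedAddCommGroup E] [NormedSpace 𝕜 E] [FiniteDimensional 𝕜 E]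
  [NormedAddCommGroup F] [NormedSpace 𝕜 F] [FiniteDimensional 𝕜 F]
  [NormedAddCommGroup G] [NormedSpace 𝕜 G]

noncomputable def toContinuousBilin (B : E →ₗ[𝕜] F →ₗ[𝕜] G) : E →L[𝕜] F →L[𝕜] G :=
  toContinuousLinearMap (toContinuousLinearMap.toLinearMap ∘ₗ B)

@[simp]
theorem toContinuousBilin_apply (B : E →ₗ[𝕜] F →ₗ[𝕜] G) (x : E) (y : F) :
    B.toContinuousBilin x y = B x y :=
  rfl

end LinearMap

section Closed

variable {𝕜 E F : Type*} [NontriviallyNormedField 𝕜]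
  [NormedAddCommGroup E] [NormedSpace 𝕜 E] [NormedAddCommGroup F] [NormedSpace 𝕜 F]

theorem isClosed_setOfPred_preserves (B : E →L[𝕜] E →L[𝕜] F) :
    IsClosed {f : E →L[𝕜] E | ∀ x, B (f x) (f x) = B x x} := by
  simp only [Set.ofPred_forall]
  exact isClosed_iInter fun x => isClosed_eq (by fun_prop) continuous_const

theorem isClosed_setOfPred_map_bilin (β : E →L[𝕜] E →L[𝕜] E) :
    IsClosed {f : E →L[𝕜] E | ∀ x y, f (β x y) = β (f x) (f y)} := by
  simp only [Set.ofPred_forall]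
  exact isClosed_iInter fun x => isClosed_iInter fun y => isClosed_eq (by fun_prop) (by fun_prop)

end Closed

section Coercive

variable {E : Type*} [NormedAddCommGroup E] [NormedSpace ℝ E]

theorem isCoercive_of_pos [FiniteDimensional ℝ E] (B : E →L[ℝ] E →L[ℝ] ℝ)
    (hB : ∀ u, u ≠ 0 → 0 < B u u) : IsCoercive B := by
  rcases subsingleton_or_nontrivial E with hE | hE
  · exact ⟨1, one_pos, fun u => by simp [Subsingleton.elim u 0]⟩
  obtain ⟨v₀, hv₀, hmin⟩ := (isCompact_sphere (0 : E) 1).exists_isMinOn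
    (NormedSpace.sphere_nonempty.mpr zero_le_one)
    (by fun_prop : Continuous fun v => B v v).continuousOn
  refine ⟨B v₀ v₀, hB v₀ (ne_zero_of_mem_unit_sphere ⟨v₀, hv₀⟩), fun u => ?_⟩
  rcases eq_or_ne u 0 with rfl | hu
  · simp
  have hnorm : ‖u‖ ≠ 0 := norm_ne_zero_iff.mpr hu
  have hunit : ‖u‖⁻¹ • u ∈ Metric.sphere (0 : E) 1 := by
    simp [norm_smul, hnorm]
  have hscale : B u u = B (‖u‖⁻¹ • u) (‖u‖⁻¹ • u) * ‖u‖ * ‖u‖ := by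
    simp only [map_smul, smul_apply, smul_eq_mul]
    field_simp
  rw [hscale]
  gcongr
  exact hmin hunit

theorem IsCoercive.isBounded_setOfPred_preserves {B : E →L[ℝ] E →L[ℝ] ℝ} (hB : IsCoercive B) :
    IsBounded {f : E →L[ℝ] E | ∀ x, B (f x) (f x) = B x x} := by
  obtain ⟨c, hc, hcB⟩ := hB
  refine (Metric.isBounded_closedBall (x := 0) (r := √(‖B‖ / c))).subset fun f hf => ?_
  rw [Metric.mem_closedBall, dist_zero_right]
  refine f.opNorm_le_bound (Real.sqrt_nonneg _) fun x => ?_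
  have hsq : ‖f x‖ ^ 2 ≤ (√(‖B‖ / c) * ‖x‖) ^ 2 := by
    rw [mul_pow, Real.sq_sqrt (by positivity), div_mul_eq_mul_div, le_div_iff₀ hc]
    calc ‖f x‖ ^ 2 * c = c * ‖f x‖ * ‖f x‖ := by ring
      _ ≤ B (f x) (f x) := hcB (f x)
      _ = B x x := hf x
      _ ≤ ‖B x x‖ := Real.le_norm_self _
      _ ≤ ‖B‖ * ‖x‖ * ‖x‖ := B.le_opNorm₂ x x
      _ = ‖B‖ * ‖x‖ ^ 2 := by ring
  exact (sq_le_sq₀ (norm_nonneg _) (by positivity)).mp hsq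

end Coercive

theorem LinearMap.bijective_of_pos_of_preserves {𝕜 V : Type*} [Field 𝕜] [PartialOrder 𝕜]
    [AddCommGroup V] [Module 𝕜 V] [FiniteDimensional 𝕜 V] {B : V →ₗ[𝕜] V →ₗ[𝕜] 𝕜}
    (hB : ∀ u, u ≠ 0 → 0 < B u u) {f : V →ₗ[𝕜] V} (hf : ∀ x, B (f x) (f x) = B x x) :
    Bijective f := by
  have hinj : Injective f := by
    rw [← LinearMap.ker_eq_bot, LinearMap.ker_eq_bot']
    intro x hx
    by_contra hx0
    exact (hB x hx0).ne (by rw [← hf x, hx]; simp)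
  exact ⟨hinj, LinearMap.injective_iff_surjective.mp hinj⟩

section Killing

variable {R M : Type*} [CommRing R] [AddCommGroup M] [Module R M]

noncomputable def negKillingForm (bracket : M →ₗ[R] M →ₗ[R] M) : M →ₗ[R] M →ₗ[R] R :=
  -((LinearMap.mul R (Module.End R M)).compl₁₂ bracket bracket).compr₂ (LinearMap.trace R M)

theorem negKillingForm_apply (bracket : M →ₗ[R] M →ₗ[R] M) (u v : M) :
    negKillingForm bracket u v = -LinearMap.trace R M (bracket u ∘ₗ bracket v) :=
  rfl

theorem conj_bracket_of_map_bracket {bracket : M →ₗ[R] M →ₗ[R] M} (e : M ≃ₗ[R] M)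
    (he : ∀ x y, e (bracket x y) = bracket (e x) (e y)) (w : M) :
    bracket (e w) = e.conj (bracket w) := by
  ext x
  simpa [LinearEquiv.conj_apply_apply] using (he w (e.symm x)).symm

theorem negKillingForm_map {bracket : M →ₗ[R] M →ₗ[R] M} (e : M ≃ₗ[R] M)
    (he : ∀ x y, e (bracket x y) = bracket (e x) (e y)) (u v : M) :
    negKillingForm bracket (e u) (e v) = negKillingForm bracket u v := by
  simp only [negKillingForm_apply, conj_bracket_of_map_bracket e he, ← LinearEquiv.conj_comp,
    LinearMap.trace_conj']

end Killing

theorem automorphism_group_isCompact_general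
    {E : Type*} [NormedAddCommGroup E] [NormedSpace ℝ E] [FiniteDimensional ℝ E]
    (bracket : E →ₗ[ℝ] E →ₗ[ℝ] E)
    (hpos : ∀ u : E, u ≠ 0 → 0 < -(LinearMap.trace ℝ E (bracket u ∘ₗ bracket u))) :
    IsCompact {f : E →L[ℝ] E | Function.Bijective f ∧
      ∀ x y : E, f (bracket x y) = bracket (f x) (f y)} := by
  set K := (negKillingForm bracket).toContinuousBilin
  have hS : {f : E →L[ℝ] E | Bijective f ∧ ∀ x y, f (bracket x y) = bracket (f x) (f y)} =
      {f | ∀ x, K (f x) (f x) = K x x} ∩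
        {f | ∀ x y, f (bracket.toContinuousBilin x y) =
          bracket.toContinuousBilin (f x) (f y)} := by
    ext f
    constructor
    · rintro ⟨hbij, hmap⟩
      exact ⟨fun x => negKillingForm_map (.ofBijective f.toLinearMap hbij) hmap x x, hmap⟩
    · rintro ⟨hf, hmap⟩
      exact ⟨LinearMap.bijective_of_pos_of_preserves (B := negKillingForm bracket) hpos hf, hmap⟩
  rw [hS]
  exact Metric.isCompact_of_isClosed_isBounded
    ((isClosed_setOfPred_preserves K).inter (isClosed_setOfPred_map_bilin _))
    ((isCoercive_of_pos K hpos).isBounded_setOfPred_preserves.subset Set.inter_subset_left)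

/-- Let `g` be a finite-dimensional real Lie algebra (realized as a finite-dimensional
real normed space `E` with a Lie bracket given by a bilinear map satisfying
antisymmetry and the Jacobi identity) such that `⟨u,v⟩ = -tr(ad u ∘ ad v)` is
positive definite.  Then the set of all automorphisms of `g`, regarded as a subset
of the (finite-dimensional, normed) space of linear endomorphisms of `g`, is compact. -/
theorem automorphism_group_isCompact
    {E : Type*} [NormedAddCommGroup E] [NormedSpace ℝ E] [FiniteDimensional ℝ E]
    (bracket : E →ₗ[ℝ] E →ₗ[ℝ] E)
    (hskew : ∀ x : E, bracket x x = 0)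
    (hjacobi : ∀ x y z : E,
      bracket x (bracket y z) + bracket y (bracket z x) + bracket z (bracket x y) = 0)
    (hpos : ∀ u : E, u ≠ 0 → 0 < -(LinearMap.trace ℝ E (bracket u ∘ₗ bracket u))) :
    IsCompact {f : E →L[ℝ] E | Function.Bijective f ∧
      ∀ x y : E, f (bracket x y) = bracket (f x) (f y)} :=
  automorphism_group_isCompact_general bracket hpos
end

section
/- (Orthogonality of characters of inequivalent irreducible representations) Let G be a compact topological group with Haar probability measure μ. Let Φ and Ψ be continuous unitary representations of G, both irreducible and not equivalent, with characters χ(x) = tr Φ(x) and χ'(x) = tr Ψ(x). Then ∫_G χ(x) · conj(χ'(x)) dμ(x) = 0. -/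
/-!
For every matrix `A`, the average of `x ↦ Φ(x) A Ψ(x)*` over `G` intertwines `Ψ` with `Φ`, by
left invariance of `μ`. By Schur's lemma a nonzero intertwiner between irreducible representations
is invertible, and its inverse would make `Φ` and `Ψ` equivalent, so every such average vanishes.
For `A = E_kl` its `(k, l)` entry is `∫ Φ_kk conj Ψ_ll`, and the sum of these over `k, l` is the
integral of `χ conj χ'`.
-/

open MeasureTheory Matrix

namespace Matrix

variable {G K ι κ : Type*} [Field K] [Fintype ι] [Fintype κ]

def IsIrreducibleFamily (ρ : G → Matrix ι ι K) : Prop :=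
  ∀ W : Submodule K (ι → K), (∀ x, ∀ v ∈ W, ρ x *ᵥ v ∈ W) → W = ⊥ ∨ W = ⊤

variable {ρ : G → Matrix ι ι K} {σ : G → Matrix κ κ K} {S : Matrix ι κ K}

lemma mulVec_mem_ker_mulVecLin_of_intertwines (h : ∀ x, ρ x * S = S * σ x) (x : G)
    {v : κ → K} (hv : v ∈ LinearMap.ker S.mulVecLin) : σ x *ᵥ v ∈ LinearMap.ker S.mulVecLin := by
  rw [LinearMap.mem_ker, mulVecLin_apply] at hv ⊢
  rw [mulVec_mulVec, ← h, ← mulVec_mulVec, hv, mulVec_zero]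

lemma mulVec_mem_range_mulVecLin_of_intertwines (h : ∀ x, ρ x * S = S * σ x) (x : G)
    {v : ι → K} (hv : v ∈ LinearMap.range S.mulVecLin) :
    ρ x *ᵥ v ∈ LinearMap.range S.mulVecLin := by
  obtain ⟨w, rfl⟩ := hv
  exact ⟨σ x *ᵥ w, by rw [mulVecLin_apply, mulVecLin_apply, mulVec_mulVec, ← h, mulVec_mulVec]⟩

theorem eq_zero_or_bijective_mulVecLin_of_intertwines (hρ : IsIrreducibleFamily ρ)
    (hσ : IsIrreducibleFamily σ) (h : ∀ x, ρ x * S = S * σ x) :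
    S = 0 ∨ Function.Bijective S.mulVecLin := by
  classical
  have eq_zero : S.mulVecLin = 0 → S = 0 := fun h0 =>
    toLin'.injective (by rw [toLin'_apply', h0, map_zero])
  rcases hσ _ fun x _ => mulVec_mem_ker_mulVecLin_of_intertwines h x with hker | hker
  · rcases hρ _ fun x _ => mulVec_mem_range_mulVecLin_of_intertwines h x with hrange | hrange
    · exact .inl (eq_zero (LinearMap.range_eq_bot.mp hrange))
    · exact .inr ⟨LinearMap.ker_eq_bot.mp hker, LinearMap.range_eq_top.mp hrange⟩
  · exact .inl (eq_zero (LinearMap.ker_eq_top.mp hker))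

theorem exists_bijective_intertwiner_of_bijective [DecidableEq ι] [DecidableEq κ]
    (hS : Function.Bijective S.mulVecLin) (h : ∀ x, ρ x * S = S * σ x) :
    ∃ T : Matrix κ ι K, Function.Bijective T.mulVecLin ∧ ∀ x, σ x * T = T * ρ x := by
  let e := LinearEquiv.ofBijective S.mulVecLin hS
  have hT : (LinearMap.toMatrix' e.symm.toLinearMap).mulVecLin = e.symm := by
    rw [← toLin'_apply', toLin'_toMatrix']
  set T := LinearMap.toMatrix' e.symm.toLinearMap
  have hTS : T * S = 1 := toLin'.injective <| LinearMap.ext fun v => by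
    rw [toLin'_apply', mulVecLin_mul, hT, toLin'_one]
    exact e.symm_apply_apply v
  have hST : S * T = 1 := toLin'.injective <| LinearMap.ext fun v => by
    rw [toLin'_apply', mulVecLin_mul, hT, toLin'_one]
    exact e.apply_symm_apply v
  refine ⟨T, hT ▸ e.symm.bijective, fun x => ?_⟩
  calc σ x * T = T * S * σ x * T := by rw [hTS, one_mul]
    _ = T * ρ x * (S * T) := by rw [Matrix.mul_assoc T S, ← h]; simp only [Matrix.mul_assoc]
    _ = T * ρ x := by rw [hST, Matrix.mul_one]

end Matrix

section EntrywiseIntegral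

variable {𝕜 X ι κ : Type*} [RCLike 𝕜] [Fintype ι] [Fintype κ] [MeasurableSpace X] {μ : Measure X}

lemma Matrix.trace_mul_conj_trace_eq_sum [DecidableEq ι] [DecidableEq κ] (P : Matrix ι ι 𝕜)
    (Q : Matrix κ κ 𝕜) :
    trace P * starRingEnd 𝕜 (trace Q) =
      ∑ k, ∑ l, (P * (single k l 1 : Matrix ι κ 𝕜) * star Q) k l := by
  have entry (k : ι) (l : κ) :
      (P * (single k l 1 : Matrix ι κ 𝕜) * star Q) k l = P k k * starRingEnd 𝕜 (Q l l) := by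
    rw [mul_apply, Finset.sum_eq_single l (fun j _ hj => by simp [hj]) (by simp)]
    simp
  simp only [entry, trace, diag, map_sum, Finset.sum_mul_sum]

omit [Fintype κ] in
lemma Matrix.mul_of_integral {F : X → Matrix ι κ 𝕜} (hF : ∀ i j, Integrable (fun x => F x i j) μ)
    {ι' : Type*} (M : Matrix ι' ι 𝕜) :
    M * of (fun i j => ∫ x, F x i j ∂μ) = of fun i j => ∫ x, (M * F x) i j ∂μ := by
  ext i j
  simp only [mul_apply, of_apply, ← integral_const_mul]
  exact (integral_finsetSum _ fun k _ => (hF k j).const_mul _).symm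

omit [Fintype ι] in
lemma Matrix.of_integral_mul {F : X → Matrix ι κ 𝕜} (hF : ∀ i j, Integrable (fun x => F x i j) μ)
    {κ' : Type*} (M : Matrix κ κ' 𝕜) :
    of (fun i j => ∫ x, F x i j ∂μ) * M = of fun i j => ∫ x, (F x * M) i j ∂μ := by
  ext i j
  simp only [mul_apply, of_apply, ← integral_mul_const]
  exact (integral_finsetSum _ fun k _ => (hF i k).mul_const _).symm

end EntrywiseIntegral

section IntertwiningAverage

variable {𝕜 G ι κ : Type*} [RCLike 𝕜] [Fintype ι] [Fintype κ] [DecidableEq ι] [DecidableEq κ]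
  [Group G]

/-- Integrated entrywise, as matrix types carry no global normed structure. -/
noncomputable def intertwiningAverage [MeasurableSpace G] (μ : Measure G)
    (Φ : G →* unitaryGroup ι 𝕜) (Ψ : G →* unitaryGroup κ 𝕜) (A : Matrix ι κ 𝕜) : Matrix ι κ 𝕜 :=
  of fun i j => ∫ x, ((Φ x : Matrix ι ι 𝕜) * A * star (Ψ x : Matrix κ κ 𝕜)) i j ∂μ

lemma mul_intertwiningAverage [MeasurableSpace G] [MeasurableMul G] (μ : Measure G)
    [μ.IsMulLeftInvariant]
    (Φ : G →* unitaryGroup ι 𝕜) (Ψ : G →* unitaryGroup κ 𝕜) {A : Matrix ι κ 𝕜}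
    (hA : ∀ i j, Integrable
      (fun x => ((Φ x : Matrix ι ι 𝕜) * A * star (Ψ x : Matrix κ κ 𝕜)) i j) μ) (y : G) :
    (Φ y : Matrix ι ι 𝕜) * intertwiningAverage μ Φ Ψ A =
      intertwiningAverage μ Φ Ψ A * (Ψ y : Matrix κ κ 𝕜) := by
  have covariance (x : G) :
      (Φ y : Matrix ι ι 𝕜) * ((Φ x : Matrix ι ι 𝕜) * A * star (Ψ x : Matrix κ κ 𝕜)) =
        (Φ (y * x) : Matrix ι ι 𝕜) * A * star (Ψ (y * x) : Matrix κ κ 𝕜) *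
          (Ψ y : Matrix κ κ 𝕜) := by
    simp only [map_mul, Submonoid.coe_mul, star_mul, Matrix.mul_assoc,
      UnitaryGroup.star_mul_self, Matrix.mul_one]
  rw [intertwiningAverage, mul_of_integral hA, of_integral_mul hA]
  ext i j
  simp only [of_apply, covariance]
  exact integral_mul_left_eq_self
    (fun x => ((Φ x : Matrix ι ι 𝕜) * A * star (Ψ x : Matrix κ κ 𝕜) * (Ψ y : Matrix κ κ 𝕜)) i j) y

end IntertwiningAverage

lemma integrable_mul_mul_star_apply_of_continuous {𝕜 X ι κ : Type*} [RCLike 𝕜]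
    [Fintype ι] [Fintype κ]
    [TopologicalSpace X] [CompactSpace X] [MeasurableSpace X] [OpensMeasurableSpace X]
    {μ : Measure X} [IsFiniteMeasureOnCompacts μ] {P : X → Matrix ι ι 𝕜} {Q : X → Matrix κ κ 𝕜}
    (hP : Continuous P) (hQ : Continuous Q) (A : Matrix ι κ 𝕜) (i : ι) (j : κ) :
    Integrable (fun x => (P x * A * star (Q x)) i j) μ :=
  ((hP.matrix_mul continuous_const).matrix_mul hQ.matrix_conjTranspose |>.matrix_elem i j)
    |>.integrable_of_hasCompactSupport (.of_compactSpace _)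

theorem integral_char_mul_conj_char_eq_zero_general
    {G : Type*} [Group G] [TopologicalSpace G] [IsTopologicalGroup G] [CompactSpace G]
    [MeasurableSpace G] [BorelSpace G]
    (μ : Measure G) [μ.IsHaarMeasure]
    {m n : ℕ}
    (Φ : G →* Matrix.unitaryGroup (Fin m) ℂ) (Ψ : G →* Matrix.unitaryGroup (Fin n) ℂ)
    (hΦcont : Continuous fun x : G => (Φ x : Matrix (Fin m) (Fin m) ℂ))
    (hΨcont : Continuous fun x : G => (Ψ x : Matrix (Fin n) (Fin n) ℂ))
    (hΦirr : ∀ W : Submodule ℂ (Fin m → ℂ),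
      (∀ x : G, ∀ v ∈ W, (Φ x : Matrix (Fin m) (Fin m) ℂ).mulVec v ∈ W) → W = ⊥ ∨ W = ⊤)
    (hΨirr : ∀ W : Submodule ℂ (Fin n → ℂ),
      (∀ x : G, ∀ v ∈ W, (Ψ x : Matrix (Fin n) (Fin n) ℂ).mulVec v ∈ W) → W = ⊥ ∨ W = ⊤)
    (hneq : ¬ ∃ T : Matrix (Fin n) (Fin m) ℂ, Function.Bijective T.mulVecLin ∧
      ∀ x : G, (Ψ x : Matrix (Fin n) (Fin n) ℂ) * T = T * (Φ x : Matrix (Fin m) (Fin m) ℂ)) :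
    ∫ x : G, Matrix.trace (Φ x : Matrix (Fin m) (Fin m) ℂ) *
      (starRingEnd ℂ) (Matrix.trace (Ψ x : Matrix (Fin n) (Fin n) ℂ)) ∂μ = 0 := by
  have hint := integrable_mul_mul_star_apply_of_continuous (μ := μ) hΦcont hΨcont
  have average_eq_zero (A : Matrix (Fin m) (Fin n) ℂ) : intertwiningAverage μ Φ Ψ A = 0 := by
    have hS := mul_intertwiningAverage μ Φ Ψ (hint A)
    exact (eq_zero_or_bijective_mulVecLin_of_intertwines hΦirr hΨirr hS).resolve_right
      fun hbij => hneq (exists_bijective_intertwiner_of_bijective hbij hS)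
  simp_rw [trace_mul_conj_trace_eq_sum]
  rw [integral_finsetSum _ fun k _ => integrable_finsetSum _ fun l _ => hint _ k l]
  refine Finset.sum_eq_zero fun k _ => ?_
  rw [integral_finsetSum _ fun l _ => hint _ k l]
  refine Finset.sum_eq_zero fun l _ => ?_
  simpa [intertwiningAverage] using congr_fun₂ (average_eq_zero (single k l 1)) k l

/-- Orthogonality of characters: the characters of two inequivalent continuous
irreducible unitary representations of a compact group are orthogonal. -/
theorem integral_char_mul_conj_char_eq_zero
    {G : Type*} [Group G] [TopologicalSpace G] [IsTopologicalGroup G] [CompactSpace G]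
    [MeasurableSpace G] [BorelSpace G]
    (μ : Measure G) [μ.IsHaarMeasure] [μ.IsMulRightInvariant] [IsProbabilityMeasure μ]
    {m n : ℕ}
    (Φ : G →* Matrix.unitaryGroup (Fin m) ℂ) (Ψ : G →* Matrix.unitaryGroup (Fin n) ℂ)
    (hΦcont : Continuous fun x : G => (Φ x : Matrix (Fin m) (Fin m) ℂ))
    (hΨcont : Continuous fun x : G => (Ψ x : Matrix (Fin n) (Fin n) ℂ))
    (hΦirr : ∀ W : Submodule ℂ (Fin m → ℂ),
      (∀ x : G, ∀ v ∈ W, (Φ x : Matrix (Fin m) (Fin m) ℂ).mulVec v ∈ W) → W = ⊥ ∨ W = ⊤)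
    (hΨirr : ∀ W : Submodule ℂ (Fin n → ℂ),
      (∀ x : G, ∀ v ∈ W, (Ψ x : Matrix (Fin n) (Fin n) ℂ).mulVec v ∈ W) → W = ⊥ ∨ W = ⊤)
    (hneq : ¬ ∃ T : Matrix (Fin n) (Fin m) ℂ, Function.Bijective T.mulVecLin ∧
      ∀ x : G, (Ψ x : Matrix (Fin n) (Fin n) ℂ) * T = T * (Φ x : Matrix (Fin m) (Fin m) ℂ)) :
    ∫ x : G, Matrix.trace (Φ x : Matrix (Fin m) (Fin m) ℂ) *
      (starRingEnd ℂ) (Matrix.trace (Ψ x : Matrix (Fin n) (Fin n) ℂ)) ∂μ = 0 :=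
  integral_char_mul_conj_char_eq_zero_general μ Φ Ψ hΦcont hΨcont hΦirr hΨirr hneq
end
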